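/- Let n ≥ 1 and let k be an index with 1 < k < n. Let S be the n×n real matrix equal to the identity matrix except in row k, where S_{k,k-1} = c ≥ 0, S_{k,k} = d > 0, S_{k,k+1} = e ≥ 0, and all other entries of row k are zero. Then S is totally nonnegative and invertible. -/

import Mathlib

/-- A real square matrix is *totally nonnegative* if every minor (the determinant of
any square submatrix obtained by selecting equally many rows and columns, preserving
their order) is nonnegative. -/
def TotallyNonneg {n : ℕ} (A : Matrix (Fin n) (Fin n) ℝ) : Prop :=
  ∀ (k : ℕ) (r c : Fin k → Fin n), StrictMono r → StrictMono c →
    0 ≤ (A.submatrix r c).det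

/-! Row `k` of the step matrix is a nonnegative combination of the unit rows `k - 1`, `k`,
`k + 1`, and all other rows are unit rows. Expanding a minor along row `k` by multilinearity
writes it as a nonnegative combination of minors of the identity whose row selections are
still monotone, because replacing `k` by a neighbour does not break the order. Such a minor is
`0` (repeated row or zero row) or `1`. The determinant of the whole matrix is the diagonal
entry `d`. -/

open Function Matrix

theorem StrictMono.monotone_update {α β : Type*} [LinearOrder α] [Preorder β]
    {f : α → β} (hf : StrictMono f) {a : α} {x : β}
    (hlt : ∀ y, y < f a → y ≤ x) (hgt : ∀ y, f a < y → x ≤ y) :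
    Monotone (update f a x) := by
  intro i j hij
  rcases hij.eq_or_lt with rfl | hij
  · exact le_rfl
  by_cases hi : i = a <;> by_cases hj : j = a
  · exact absurd (hi.trans hj.symm) hij.ne
  · subst hi
    rw [update_self, update_of_ne hj]
    exact hgt _ (hf hij)
  · subst hj
    rw [update_self, update_of_ne hi]
    exact hlt _ (hf hij)
  · rw [update_of_ne hi, update_of_ne hj]
    exact (hf hij).le

section Identity

variable {R ι : Type*} [CommRing R]

theorem det_one_submatrix_nonneg [PartialOrder R] [IsOrderedRing R] [LinearOrder ι]
    {m : ℕ} {r c : Fin m → ι} (hr : Monotone r) (hc : StrictMono c) :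
    0 ≤ ((1 : Matrix ι ι R).submatrix r c).det := by
  by_cases hinj : Injective r
  swap
  · obtain ⟨i, j, hij, hne⟩ := not_injective_iff.mp hinj
    exact (det_zero_of_row_eq hne (by ext; rw [submatrix_apply, submatrix_apply, hij])).ge
  by_cases hrange : ∀ i, ∃ j, c j = r i
  · choose σ hσ using hrange
    have hσ_mono : StrictMono σ := fun i j hij =>
      hc.lt_iff_lt.mp (by rw [hσ, hσ]; exact hr.strictMono_of_injective hinj hij)
    have hrc : r = c := funext fun i => by rw [← hσ i, hσ_mono.apply_eq]
    rw [hrc, submatrix_one _ hc.injective, det_one]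
    exact zero_le_one
  · simp only [not_forall, not_exists] at hrange
    obtain ⟨i, hi⟩ := hrange
    exact (det_eq_zero_of_row_eq_zero i fun j =>
      (one_apply_ne (Ne.symm (hi j)) : (1 : Matrix ι ι R) (r i) (c j) = 0)).ge

variable [Fintype ι] [DecidableEq ι]

theorem det_one_updateRow (k : ι) (v : ι → R) :
    ((1 : Matrix ι ι R).updateRow k v).det = v k := by
  have hv : v = ∑ j, v j • (1 : Matrix ι ι R) j := by
    ext l
    simp [one_apply]
  conv_lhs => rw [hv, det_updateRow_sum, det_one]
  exact mul_one _

theorem det_submatrix_one_updateRow {m : ℕ} (k : ι) (v : ι → R) {r c : Fin m → ι}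
    (hr : Injective r) {a : Fin m} (ha : r a = k) :
    (((1 : Matrix ι ι R).updateRow k v).submatrix r c).det =
      ∑ j, v j * ((1 : Matrix ι ι R).submatrix (update r a j) c).det := by
  set N := (1 : Matrix ι ι R).submatrix r c
  have hrow : ((1 : Matrix ι ι R).updateRow k v).submatrix r c =
      N.updateRow a (∑ j, v j • fun l => (1 : Matrix ι ι R) j (c l)) := by
    ext i l
    by_cases hi : i = a
    · subst hi
      simp [ha, one_apply]
    · have hri : r i ≠ k := ha ▸ hr.ne hi
      simp [N, hi, hri]
  rw [hrow]
  have hunitRow : ∀ j, N.updateRow a (fun l => (1 : Matrix ι ι R) j (c l)) =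
      (1 : Matrix ι ι R).submatrix (update r a j) c := by
    intro j
    ext i l
    by_cases hi : i = a
    · subst hi
      rw [updateRow_self, submatrix_apply, update_self]
    · rw [updateRow_ne hi, submatrix_apply, update_of_ne hi]
      rfl
  calc (N.updateRow a (∑ j, v j • fun l => (1 : Matrix ι ι R) j (c l))).det
      = ∑ j, (N.updateRow a (v j • fun l => (1 : Matrix ι ι R) j (c l))).det :=
        detRowAlternating.map_update_sum _ a _ N
    _ = _ := by simp_rw [det_updateRow_smul, hunitRow]

end Identity

theorem totallyNonneg_one_updateRow {n : ℕ} (k : Fin n) (v : Fin n → ℝ) (hv : ∀ j, 0 ≤ v j)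
    (hsupp : ∀ j, v j ≠ 0 → (k : ℕ) ≤ j + 1 ∧ (j : ℕ) ≤ k + 1) :
    TotallyNonneg ((1 : Matrix (Fin n) (Fin n) ℝ).updateRow k v) := by
  intro m r c hr hc
  by_cases hk : ∃ a, r a = k
  · obtain ⟨a, ha⟩ := hk
    rw [det_submatrix_one_updateRow k v hr.injective ha]
    refine Finset.sum_nonneg fun j _ => ?_
    by_cases hj : v j = 0
    · simp [hj]
    obtain ⟨hlo, hhi⟩ := hsupp j hj
    refine mul_nonneg (hv j) (det_one_submatrix_nonneg (hr.monotone_update ?_ ?_) hc)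
    all_goals
      intro y hy
      rw [ha, Fin.lt_def] at hy
      rw [Fin.le_def]
      omega
  · simp only [not_exists] at hk
    have hsub : ((1 : Matrix (Fin n) (Fin n) ℝ).updateRow k v).submatrix r c =
        (1 : Matrix (Fin n) (Fin n) ℝ).submatrix r c := by
      ext i l
      simp [updateRow_ne (hk i)]
    rw [hsub]
    exact det_one_submatrix_nonneg hr.monotone hc

theorem step_matrix_totallyNonneg_invertible_general {n : ℕ} (k : Fin n)
    (c d e : ℝ) (hc : 0 ≤ c) (hd : 0 < d) (he : 0 ≤ e)
    (S : Matrix (Fin n) (Fin n) ℝ)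
    (hS : ∀ i j : Fin n, S i j =
      if i = k then
        (if (j : ℕ) + 1 = (k : ℕ) then c
         else if j = k then d
         else if (j : ℕ) = (k : ℕ) + 1 then e
         else 0)
      else (if i = j then 1 else 0)) :
    TotallyNonneg S ∧ IsUnit S := by
  obtain ⟨v, rfl⟩ : ∃ v, S = (1 : Matrix (Fin n) (Fin n) ℝ).updateRow k v := by
    refine ⟨S k, ?_⟩
    ext i j
    by_cases hi : i = k
    · subst hi; simp
    · simp [hS, hi, one_apply]
  have hv : ∀ j, v j = _ := fun j => by simpa using hS k j
  refine ⟨totallyNonneg_one_updateRow k v (fun j => ?_) (fun j hj => ?_), ?_⟩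
  · rw [hv]
    split_ifs <;> first | assumption | exact hd.le | exact le_rfl
  · rw [hv] at hj
    split_ifs at hj <;> first | omega | exact absurd rfl hj
  · rw [isUnit_iff_isUnit_det, det_one_updateRow, hv]
    simp [hd.ne']

/-- A single step of harmonic continuation: the matrix equal to the identity except in
row `k` (an interior index, zero-based: `0 < k` and `k + 1 < n`), where the entries in
columns `k-1`, `k`, `k+1` are `c ≥ 0`, `d > 0`, `e ≥ 0` and all other entries of row
`k` vanish.  Such a matrix is totally nonnegative and invertible. -/
theorem step_matrix_totallyNonneg_invertible {n : ℕ} (k : Fin n)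
    (hk0 : 0 < (k : ℕ)) (hkn : (k : ℕ) + 1 < n)
    (c d e : ℝ) (hc : 0 ≤ c) (hd : 0 < d) (he : 0 ≤ e)
    (S : Matrix (Fin n) (Fin n) ℝ)
    (hS : ∀ i j : Fin n, S i j =
      if i = k then
        (if (j : ℕ) + 1 = (k : ℕ) then c
         else if j = k then d
         else if (j : ℕ) = (k : ℕ) + 1 then e
         else 0)
      else (if i = j then 1 else 0)) :
    TotallyNonneg S ∧ IsUnit S :=
  step_matrix_totallyNonneg_invertible_general k c d e hc hd he S hS
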